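/- Let L be a finite-dimensional ω-Lie algebra over a field of characteristic zero. Then the compatible centroid Cent_c(L) is contained in the compatible quasicentroid QCent_c(L), and the commutator of any two elements of the compatible quasicentroid is a compatible quasiderivation: [QCent_c(L), QCent_c(L)] ⊆ QDer_c(L). -/
import Mathlib


variable {K L : Type*} [Field K] [CharZero K] [AddCommGroup L] [Module K L]
  [FiniteDimensional K L]

/-- compatibility of a linear map with the bilinear form. -/
def IsCompat (ω : L →ₗ[K] L →ₗ[K] K) (f : L →ₗ[K] L) : Prop :=
  ∀ x y, ω (f x) y + ω x (f y) = 0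

/-- membership in the compatible centroid `Cent_c(L)`. -/
def IsCentC (br : L →ₗ[K] L →ₗ[K] L) (ω : L →ₗ[K] L →ₗ[K] K) (f : L →ₗ[K] L) : Prop :=
  IsCompat ω f ∧ ∀ x y, br (f x) y = f (br x y) ∧ br x (f y) = f (br x y)

/-- membership in the compatible quasicentroid `QCent_c(L)`. -/
def IsQCentC (br : L →ₗ[K] L →ₗ[K] L) (ω : L →ₗ[K] L →ₗ[K] K) (f : L →ₗ[K] L) : Prop :=
  IsCompat ω f ∧ ∀ x y, br (f x) y = br x (f y)

/-- membership in the compatible quasiderivations `QDer_c(L)`. -/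
def IsQDerC (br : L →ₗ[K] L →ₗ[K] L) (ω : L →ₗ[K] L →ₗ[K] K) (f : L →ₗ[K] L) : Prop :=
  IsCompat ω f ∧ ∃ f' : L →ₗ[K] L, ∀ x y, br (f x) y + br x (f y) = f' (br x y)

theorem stmt19 (br : L →ₗ[K] L →ₗ[K] L) (ω : L →ₗ[K] L →ₗ[K] K)
    (hanti : ∀ x y, br x y = - br y x)
    (hskew : ∀ x y, ω x y = - ω y x)
    (hjac : ∀ x y z, br (br x y) z + br (br y z) x + br (br z x) y
      = ω x y • z + ω y z • x + ω z x • y) :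
    (∀ f : L →ₗ[K] L, IsCentC br ω f → IsQCentC br ω f) ∧
    (∀ f g : L →ₗ[K] L, IsQCentC br ω f → IsQCentC br ω g →
      IsQDerC br ω (f ∘ₗ g - g ∘ₗ f)) := by
  constructor
  · rintro f ⟨hc, h⟩
    exact ⟨hc, fun x y => ((h x y).1).trans ((h x y).2).symm⟩
  · rintro f g ⟨hfc, hf⟩ ⟨hgc, hg⟩
    have compat : ∀ (h : L →ₗ[K] L), IsCompat ω h → ∀ x y,
        ω (h x) y = - ω x (h y) := by
      intro h hh x y
      linear_combination hh x y
    constructor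
    · intro x y
      simp only [LinearMap.sub_apply, LinearMap.comp_apply, map_sub, LinearMap.sub_apply]
      have h1 : ω (f (g x)) y = ω x (g (f y)) := by
        rw [compat f hfc, compat g hgc]; ring
      have h2 : ω (g (f x)) y = ω x (f (g y)) := by
        rw [compat g hgc, compat f hfc]; ring
      rw [h1, h2]; ring
    · refine ⟨0, fun x y => ?_⟩
      simp only [LinearMap.sub_apply, LinearMap.comp_apply, map_sub, LinearMap.sub_apply,
        LinearMap.zero_apply]
      have h1 : br (f (g x)) y = br x (g (f y)) := by rw [hf, hg]
      have h2 : br (g (f x)) y = br x (f (g y)) := by rw [hg, hf]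
      rw [h1, h2]; abel
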